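/- Let N and M be positive natural numbers, let θ_1, …, θ_M be positive reals, and let ξ_1, …, ξ_M be independent real random variables with ξ_m following the Gamma distribution with shape N and scale θ_m for each m. Then E[(∑_{m=1}^M ξ_m)^4] = ∑_m N(N+1)(N+2)(N+3) θ_m^4 + 4 ∑_{m ≠ m_1} N(N+1)(N+2) θ_m^3 · N θ_{m_1} + 3 ∑_{m ≠ m_1} N(N+1) θ_m^2 · N(N+1) θ_{m_1}^2 + 6 ∑_{m, m_1, m_2 pairwise distinct} N(N+1) θ_m^2 · N θ_{m_1} · N θ_{m_2} + ∑_{m, m_1, m_2, m_3 pairwise distinct} N^4 θ_m θ_{m_1} θ_{m_2} θ_{m_3}. (This is the second moment u_{U_k^1}^{(2)} of the desired-signal term in Lemma 1, equation (35) combined with the Gamma moments (17).) -/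

import Mathlib

open MeasureTheory ProbabilityTheory Real

/-- The density of the Gamma distribution with shape `a` and scale `θ`
(with respect to Lebesgue measure): `t ^ (a-1) * exp (-t/θ) / (Γ a * θ ^ a)` for `t > 0`,
and `0` for `t ≤ 0`. -/
noncomputable def gammaScalePDF (a θ t : ℝ) : ℝ :=
  if 0 < t then t ^ (a - 1) * Real.exp (-t / θ) / (Real.Gamma a * θ ^ a) else 0

/-- A real random variable `X` on `(Ω, P)` follows the Gamma distribution with
shape `a` and scale `θ`. -/
def HasGammaLaw {Ω : Type*} [MeasurableSpace Ω] (P : Measure Ω) (X : Ω → ℝ)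
    (a θ : ℝ) : Prop :=
  Measure.map X P = volume.withDensity (fun t => ENNReal.ofReal (gammaScalePDF a θ t))

/-!
Expanding `(∑ ξ_m)^4` according to which of the four indices coincide writes it as a sum of
monomials `ξ_a^i ξ_b^j ⋯` in pairwise distinct indices. By independence the expectation of each
such monomial is the product of the moments, and a Gamma variable of shape `a` and scale `θ` has
`E[X^k] = a (a + 1) ⋯ (a + k - 1) θ^k`, from `∫₀^∞ t^(a+k-1) e^(-t/θ) dt = Γ(a + k) θ^(a+k)`.
-/

open Finset

theorem Real.Gamma_add_nat {a : ℝ} (ha : ∀ j : ℕ, a ≠ -j) (k : ℕ) :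
    Gamma (a + k) = (ascPochhammer ℝ k).eval a * Gamma a := by
  induction k with
  | zero => simp
  | succ k ih =>
    have hak : a + k ≠ 0 := fun h => ha k (eq_neg_of_add_eq_zero_left h)
    rw [Nat.cast_succ, ← add_assoc, Gamma_add_one hak, ih, ascPochhammer_succ_eval]
    ring

section GammaDensity

variable {a θ : ℝ}

lemma measurable_gammaScalePDF (a θ : ℝ) : Measurable (gammaScalePDF a θ) :=
  Measurable.ite measurableSet_Ioi (by fun_prop) measurable_const

lemma gammaScalePDF_nonneg (ha : 0 ≤ a) (hθ : 0 ≤ θ) (t : ℝ) : 0 ≤ gammaScalePDF a θ t := by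
  unfold gammaScalePDF
  split_ifs with ht
  · have := Gamma_nonneg_of_nonneg ha
    positivity
  · exact le_rfl

lemma gammaScalePDF_toNNReal_smul (ha : 0 ≤ a) (hθ : 0 ≤ θ) (t y : ℝ) :
    (gammaScalePDF a θ t).toNNReal • y = gammaScalePDF a θ t * y := by
  rw [NNReal.smul_def, smul_eq_mul, Real.coe_toNNReal _ (gammaScalePDF_nonneg ha hθ t)]

lemma gammaScalePDF_of_nonpos {t : ℝ} (ht : t ≤ 0) : gammaScalePDF a θ t = 0 :=
  if_neg ht.not_gt

lemma pow_mul_gammaScalePDF_eqOn (k : ℕ) :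
    Set.EqOn (fun t => t ^ k * gammaScalePDF a θ t)
      (fun t => (Gamma a * θ ^ a)⁻¹ * (t ^ (a + k - 1) * exp (-(θ⁻¹ * t)))) (Set.Ioi 0) := by
  intro t (ht : 0 < t)
  simp only [gammaScalePDF, if_pos ht]
  rw [add_sub_right_comm, rpow_add ht, rpow_natCast, show -(θ⁻¹ * t) = -t / θ by ring]
  ring

lemma integrable_pow_mul_gammaScalePDF (ha : 0 < a) (hθ : 0 < θ) (k : ℕ) :
    Integrable (fun t => t ^ k * gammaScalePDF a θ t) := by
  rw [← integrableOn_iff_integrable_of_support_subset (s := Set.Ioi 0) fun t ht => ?_]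
  · refine IntegrableOn.congr_fun ?_ (pow_mul_gammaScalePDF_eqOn k).symm measurableSet_Ioi
    have hs : -1 < a + k - 1 := by linarith [(Nat.cast_nonneg k : (0:ℝ) ≤ k)]
    have h := integrableOn_rpow_mul_exp_neg_mul_rpow hs one_pos (inv_pos.2 hθ)
    simp only [rpow_one, neg_mul] at h
    exact Integrable.const_mul h _
  · by_contra h
    exact ht (by simp [gammaScalePDF_of_nonpos (not_lt.1 h)])

lemma integral_pow_mul_gammaScalePDF (ha : 0 < a) (hθ : 0 < θ) (k : ℕ) :
    ∫ t, t ^ k * gammaScalePDF a θ t = (ascPochhammer ℝ k).eval a * θ ^ k := by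
  have hak : 0 < a + k := by positivity
  rw [← setIntegral_eq_integral_of_forall_compl_eq_zero (s := Set.Ioi 0) fun t ht => by
      simp [gammaScalePDF_of_nonpos (not_lt.1 ht)],
    setIntegral_congr_fun measurableSet_Ioi (pow_mul_gammaScalePDF_eqOn k), integral_const_mul,
    integral_rpow_mul_exp_neg_mul_Ioi hak (inv_pos.2 hθ), one_div, inv_inv, rpow_add hθ,
    rpow_natCast, Gamma_add_nat (fun j => by linarith [(Nat.cast_nonneg j : (0:ℝ) ≤ j)])]
  have := Gamma_pos_of_pos ha
  have := rpow_pos_of_pos hθ a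
  field_simp

end GammaDensity

namespace HasGammaLaw

variable {Ω : Type*} [MeasurableSpace Ω] {P : Measure Ω} {X : Ω → ℝ} {a θ : ℝ}

lemma integrable_comp_iff (h : HasGammaLaw P X a θ) (hX : AEMeasurable X P) (ha : 0 ≤ a)
    (hθ : 0 ≤ θ) {g : ℝ → ℝ} (hg : Measurable g) :
    Integrable (fun ω => g (X ω)) P ↔ Integrable (fun t => gammaScalePDF a θ t * g t) := by
  rw [← Function.comp_def, ← integrable_map_measure hg.aestronglyMeasurable hX, h]
  exact (integrable_withDensity_iff_integrable_smul
    (measurable_gammaScalePDF a θ).real_toNNReal).trans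
    (by simp_rw [gammaScalePDF_toNNReal_smul ha hθ])

lemma integral_comp (h : HasGammaLaw P X a θ) (hX : AEMeasurable X P) (ha : 0 ≤ a)
    (hθ : 0 ≤ θ) {g : ℝ → ℝ} (hg : Measurable g) :
    ∫ ω, g (X ω) ∂P = ∫ t, gammaScalePDF a θ t * g t := by
  rw [← integral_map hX hg.aestronglyMeasurable, h]
  exact (integral_withDensity_eq_integral_smul
    (measurable_gammaScalePDF a θ).real_toNNReal g).trans
    (by simp_rw [gammaScalePDF_toNNReal_smul ha hθ])

lemma integrable_pow (h : HasGammaLaw P X a θ) (hX : AEMeasurable X P) (ha : 0 < a)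
    (hθ : 0 < θ) (k : ℕ) : Integrable (fun ω => X ω ^ k) P := by
  rw [h.integrable_comp_iff hX ha.le hθ.le (g := (· ^ k)) (by fun_prop)]
  simpa only [mul_comm] using integrable_pow_mul_gammaScalePDF ha hθ k

lemma integral_pow (h : HasGammaLaw P X a θ) (hX : AEMeasurable X P) (ha : 0 < a)
    (hθ : 0 < θ) (k : ℕ) : ∫ ω, X ω ^ k ∂P = (ascPochhammer ℝ k).eval a * θ ^ k := by
  rw [h.integral_comp hX ha.le hθ.le (g := (· ^ k)) (by fun_prop)]
  simpa only [mul_comm] using integral_pow_mul_gammaScalePDF ha hθ k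

lemma memLp (h : HasGammaLaw P X a θ) (hX : AEMeasurable X P) (ha : 0 < a)
    (hθ : 0 < θ) {n : ℕ} (hn : n ≠ 0) : MemLp X n P := by
  rw [← integrable_norm_rpow_iff hX.aestronglyMeasurable (by simpa using hn) (by simp)]
  simpa [← norm_pow] using (h.integrable_pow hX ha hθ n).norm

end HasGammaLaw

section DistinctSums

variable {ι R : Type*} [Fintype ι] [DecidableEq ι] [CommRing R]

lemma sum_univ_sdiff_pair {a b : ι} (hab : a ≠ b) (f : ι → R) :
    ∑ c ∈ univ \ {a, b}, f c = ∑ c, f c - f a - f b := by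
  rw [sum_sdiff_eq_sub (subset_univ _), sum_pair hab, sub_sub]

lemma sum_univ_sdiff_triple {a b c : ι} (hab : a ≠ b) (hac : a ≠ c) (hbc : b ≠ c)
    (f : ι → R) :
    ∑ d ∈ univ \ {a, b, c}, f d = ∑ d, f d - f a - f b - f c := by
  rw [sum_sdiff_eq_sub (subset_univ _), sum_insert (by simp [hab, hac]), sum_pair hbc]
  ring

lemma sum_distinct_pairs_mul (f g : ι → R) :
    ∑ a, ∑ b ∈ univ \ {a}, f a * g b = (∑ a, f a) * ∑ b, g b - ∑ a, f a * g a := by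
  simp only [← mul_sum, sum_sdiff_eq_sub (subset_univ _), sum_singleton,
    sum_sub_distrib, sum_mul]

lemma sum_distinct_triples_mul (f g h : ι → R) :
    ∑ a, ∑ b ∈ univ \ {a}, ∑ c ∈ univ \ {a, b}, f a * g b * h c =
      (∑ a, f a) * (∑ b, g b) * (∑ c, h c) - (∑ a, f a * g a) * ∑ c, h c
        - (∑ a, f a * h a) * ∑ b, g b - (∑ a, f a) * (∑ b, g b * h b)
        + 2 * ∑ a, f a * g a * h a := by
  have inner : ∀ a, ∀ b ∈ univ \ {a}, ∑ c ∈ univ \ {a, b}, f a * g b * h c =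
      f a * g b * ∑ c, h c - (f a * h a) * g b - f a * (g b * h b) := by
    intro a b hb
    rw [← mul_sum, sum_univ_sdiff_pair (by simpa [eq_comm] using hb)]
    ring
  rw [sum_congr rfl fun a _ => sum_congr rfl (inner a)]
  simp only [sum_sub_distrib, ← sum_mul, sum_distinct_pairs_mul]
  rw [sum_congr rfl fun a _ => mul_right_comm (f a) (h a) (g a),
    sum_congr rfl fun a _ => (mul_assoc (f a) (g a) (h a)).symm]
  ring

lemma sum_distinct_quadruples_mul (x : ι → R) :
    ∑ a, ∑ b ∈ univ \ {a}, ∑ c ∈ univ \ {a, b}, ∑ d ∈ univ \ {a, b, c},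
        x a * x b * x c * x d =
      (∑ a, x a) ^ 4 - 6 * (∑ a, x a ^ 2) * (∑ a, x a) ^ 2 + 3 * (∑ a, x a ^ 2) ^ 2
        + 8 * (∑ a, x a ^ 3) * (∑ a, x a) - 6 * ∑ a, x a ^ 4 := by
  have inner : ∀ a, ∀ b ∈ univ \ {a}, ∀ c ∈ univ \ {a, b},
      ∑ d ∈ univ \ {a, b, c}, x a * x b * x c * x d =
        x a * x b * x c * ∑ d, x d - (x a * x a) * x b * x c - x a * (x b * x b) * x c
          - x a * x b * (x c * x c) := by
    intro a b hb c hc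
    simp only [mem_sdiff, mem_univ, mem_insert, mem_singleton, true_and] at hb hc
    push Not at hb hc
    rw [← mul_sum, sum_univ_sdiff_triple (Ne.symm hb) (Ne.symm hc.1) (Ne.symm hc.2)]
    ring
  rw [sum_congr rfl fun a _ => sum_congr rfl fun b hb => sum_congr rfl (inner a b hb)]
  simp only [sum_sub_distrib, ← sum_mul, sum_distinct_triples_mul]
  ring_nf

theorem sum_pow_four_eq_sum_distinct (x : ι → R) :
    (∑ a, x a) ^ 4 = ∑ a, x a ^ 4 + 4 * ∑ a, ∑ b ∈ univ \ {a}, x a ^ 3 * x b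
      + 3 * ∑ a, ∑ b ∈ univ \ {a}, x a ^ 2 * x b ^ 2
      + 6 * ∑ a, ∑ b ∈ univ \ {a}, ∑ c ∈ univ \ {a, b}, x a ^ 2 * x b * x c
      + ∑ a, ∑ b ∈ univ \ {a}, ∑ c ∈ univ \ {a, b}, ∑ d ∈ univ \ {a, b, c},
          x a * x b * x c * x d := by
  rw [sum_distinct_quadruples_mul, sum_distinct_triples_mul, sum_distinct_pairs_mul,
    sum_distinct_pairs_mul]
  simp only [← pow_succ, ← pow_add]
  ring_nf

end DistinctSums

lemma MeasureTheory.MemLp.integrable_mul_mul_mul {Ω : Type*} [MeasurableSpace Ω] {μ : Measure Ω}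
    {f₁ f₂ f₃ f₄ : Ω → ℝ} (h₁ : MemLp f₁ 4 μ) (h₂ : MemLp f₂ 4 μ) (h₃ : MemLp f₃ 4 μ)
    (h₄ : MemLp f₄ 4 μ) : Integrable (fun ω => f₁ ω * f₂ ω * f₃ ω * f₄ ω) μ := by
  have : ENNReal.HolderTriple 4 4 2 := ⟨by
    rw [← two_mul, show (4 : ENNReal) = 2 * 2 by norm_num, ENNReal.mul_inv (by simp) (by simp),
      ← mul_assoc, ENNReal.mul_inv_cancel (by simp) (by simp), one_mul]⟩
  have h₁₂ : MemLp (f₁ * f₂) 2 μ := h₂.mul h₁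
  have h₃₄ : MemLp (f₃ * f₄) 2 μ := h₄.mul h₃
  simpa only [Pi.mul_def, mul_assoc] using h₁₂.integrable_mul h₃₄

namespace ProbabilityTheory

variable {Ω ι : Type*} [MeasurableSpace Ω] {P : Measure Ω} {ξ : ι → Ω → ℝ}

lemma iIndepFun.integral_prod_pow (hind : iIndepFun ξ P) (hmeas : ∀ i, AEMeasurable (ξ i) P)
    {n : ℕ} {v : Fin n → ι} (hv : Function.Injective v) (k : Fin n → ℕ) :
    ∫ ω, ∏ j, ξ (v j) ω ^ k j ∂P = ∏ j, ∫ ω, ξ (v j) ω ^ k j ∂P :=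
  (hind.precomp hv).integral_fun_prod_comp (fun j => hmeas (v j))
    (fun j => (continuous_pow (k j)).aestronglyMeasurable)

section

variable (hind : iIndepFun ξ P) (hmeas : ∀ i, AEMeasurable (ξ i) P)
include hind hmeas

lemma iIndepFun.integral_pow_mul_pow {a b : ι} (hab : a ≠ b) (j k : ℕ) :
    ∫ ω, ξ a ω ^ j * ξ b ω ^ k ∂P = (∫ ω, ξ a ω ^ j ∂P) * ∫ ω, ξ b ω ^ k ∂P := by
  simpa using hind.integral_prod_pow hmeas (v := ![a, b])
    (by simp [Function.Injective, Fin.forall_fin_succ, hab, hab.symm]) ![j, k]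

lemma iIndepFun.integral_pow_mul_pow_mul_pow {a b c : ι} (hab : a ≠ b) (hac : a ≠ c)
    (hbc : b ≠ c) (j k l : ℕ) :
    ∫ ω, ξ a ω ^ j * ξ b ω ^ k * ξ c ω ^ l ∂P =
      (∫ ω, ξ a ω ^ j ∂P) * (∫ ω, ξ b ω ^ k ∂P) * ∫ ω, ξ c ω ^ l ∂P := by
  simpa [Fin.prod_univ_succ, mul_assoc] using hind.integral_prod_pow hmeas (v := ![a, b, c])
    (by simp [Function.Injective, Fin.forall_fin_succ, *, Ne.symm]) ![j, k, l]

lemma iIndepFun.integral_mul_mul_mul {a b c d : ι} (hab : a ≠ b) (hac : a ≠ c) (had : a ≠ d)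
    (hbc : b ≠ c) (hbd : b ≠ d) (hcd : c ≠ d) :
    ∫ ω, ξ a ω * ξ b ω * ξ c ω * ξ d ω ∂P =
      (∫ ω, ξ a ω ∂P) * (∫ ω, ξ b ω ∂P) * (∫ ω, ξ c ω ∂P) * ∫ ω, ξ d ω ∂P := by
  simpa [Fin.prod_univ_succ, mul_assoc] using hind.integral_prod_pow hmeas (v := ![a, b, c, d])
    (by simp [Function.Injective, Fin.forall_fin_succ, *, Ne.symm]) 1

end

theorem integral_sum_pow_four_eq_sum_distinct [Fintype ι] [DecidableEq ι]
    (hL4 : ∀ i, MemLp (ξ i) 4 P) :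
    ∫ ω, (∑ i, ξ i ω) ^ 4 ∂P =
      ∑ a, ∫ ω, ξ a ω ^ 4 ∂P
      + 4 * ∑ a, ∑ b ∈ univ \ {a}, ∫ ω, ξ a ω ^ 3 * ξ b ω ∂P
      + 3 * ∑ a, ∑ b ∈ univ \ {a}, ∫ ω, ξ a ω ^ 2 * ξ b ω ^ 2 ∂P
      + 6 * ∑ a, ∑ b ∈ univ \ {a}, ∑ c ∈ univ \ {a, b}, ∫ ω, ξ a ω ^ 2 * ξ b ω * ξ c ω ∂P
      + ∑ a, ∑ b ∈ univ \ {a}, ∑ c ∈ univ \ {a, b}, ∑ d ∈ univ \ {a, b, c},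
          ∫ ω, ξ a ω * ξ b ω * ξ c ω * ξ d ω ∂P := by
  have hint : ∀ a b c d, Integrable (fun ω => ξ a ω * ξ b ω * ξ c ω * ξ d ω) P :=
    fun a b c d => (hL4 a).integrable_mul_mul_mul (hL4 b) (hL4 c) (hL4 d)
  -- the integrability facts below are picked up from the context by `fun_prop`
  have : ∀ a, Integrable (fun ω => ξ a ω ^ 4) P := fun a => by
    simpa only [pow_succ, pow_zero, one_mul] using hint a a a a
  have : ∀ a b, Integrable (fun ω => ξ a ω ^ 3 * ξ b ω) P := fun a b => by
    simpa only [pow_succ, pow_zero, one_mul] using hint a a a b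
  have : ∀ a b, Integrable (fun ω => ξ a ω ^ 2 * ξ b ω ^ 2) P := fun a b => by
    simpa only [pow_succ, pow_zero, one_mul, mul_assoc] using hint a a b b
  have : ∀ a b c, Integrable (fun ω => ξ a ω ^ 2 * ξ b ω * ξ c ω) P := fun a b c => by
    simpa only [pow_succ, pow_zero, one_mul] using hint a a b c
  simp_rw [sum_pow_four_eq_sum_distinct]
  simp (disch := (intros; fun_prop)) only [integral_add, integral_finsetSum, integral_const_mul]

theorem iIndepFun.integral_sum_pow_four [Fintype ι] [DecidableEq ι] (hind : iIndepFun ξ P)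
    (hL4 : ∀ i, MemLp (ξ i) 4 P) :
    ∫ ω, (∑ i, ξ i ω) ^ 4 ∂P =
      ∑ a, ∫ ω, ξ a ω ^ 4 ∂P
      + 4 * ∑ a, ∑ b ∈ univ \ {a}, (∫ ω, ξ a ω ^ 3 ∂P) * ∫ ω, ξ b ω ∂P
      + 3 * ∑ a, ∑ b ∈ univ \ {a}, (∫ ω, ξ a ω ^ 2 ∂P) * ∫ ω, ξ b ω ^ 2 ∂P
      + 6 * ∑ a, ∑ b ∈ univ \ {a}, ∑ c ∈ univ \ {a, b},
          (∫ ω, ξ a ω ^ 2 ∂P) * (∫ ω, ξ b ω ∂P) * ∫ ω, ξ c ω ∂P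
      + ∑ a, ∑ b ∈ univ \ {a}, ∑ c ∈ univ \ {a, b}, ∑ d ∈ univ \ {a, b, c},
          (∫ ω, ξ a ω ∂P) * (∫ ω, ξ b ω ∂P) * (∫ ω, ξ c ω ∂P) * ∫ ω, ξ d ω ∂P := by
  have hmeas i : AEMeasurable (ξ i) P := (hL4 i).aestronglyMeasurable.aemeasurable
  have e31 : ∀ a, ∀ b ∈ univ \ {a},
      ∫ ω, ξ a ω ^ 3 * ξ b ω ∂P = (∫ ω, ξ a ω ^ 3 ∂P) * ∫ ω, ξ b ω ∂P := by
    intro a b hb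
    simp only [mem_sdiff, mem_univ, mem_singleton, true_and] at hb
    simpa using hind.integral_pow_mul_pow hmeas (Ne.symm hb) 3 1
  have e22 : ∀ a, ∀ b ∈ univ \ {a},
      ∫ ω, ξ a ω ^ 2 * ξ b ω ^ 2 ∂P = (∫ ω, ξ a ω ^ 2 ∂P) * ∫ ω, ξ b ω ^ 2 ∂P := by
    intro a b hb
    simp only [mem_sdiff, mem_univ, mem_singleton, true_and] at hb
    exact hind.integral_pow_mul_pow hmeas (Ne.symm hb) 2 2
  have e211 : ∀ a, ∀ b ∈ univ \ {a}, ∀ c ∈ univ \ {a, b},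
      ∫ ω, ξ a ω ^ 2 * ξ b ω * ξ c ω ∂P =
        (∫ ω, ξ a ω ^ 2 ∂P) * (∫ ω, ξ b ω ∂P) * ∫ ω, ξ c ω ∂P := by
    intro a b hb c hc
    simp only [mem_sdiff, mem_univ, mem_insert, mem_singleton, true_and, not_or] at hb hc
    simpa using hind.integral_pow_mul_pow_mul_pow hmeas (Ne.symm hb) (Ne.symm hc.1)
      (Ne.symm hc.2) 2 1 1
  have e1111 : ∀ a, ∀ b ∈ univ \ {a}, ∀ c ∈ univ \ {a, b}, ∀ d ∈ univ \ {a, b, c},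
      ∫ ω, ξ a ω * ξ b ω * ξ c ω * ξ d ω ∂P =
        (∫ ω, ξ a ω ∂P) * (∫ ω, ξ b ω ∂P) * (∫ ω, ξ c ω ∂P) * ∫ ω, ξ d ω ∂P := by
    intro a b hb c hc d hd
    simp only [mem_sdiff, mem_univ, mem_insert, mem_singleton, true_and, not_or] at hb hc hd
    exact hind.integral_mul_mul_mul hmeas (Ne.symm hb) (Ne.symm hc.1) (Ne.symm hd.1)
      (Ne.symm hc.2) (Ne.symm hd.2.1) (Ne.symm hd.2.2)
  rw [integral_sum_pow_four_eq_sum_distinct hL4,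
    sum_congr rfl fun a _ => sum_congr rfl (e31 a),
    sum_congr rfl fun a _ => sum_congr rfl (e22 a),
    sum_congr rfl fun a _ => sum_congr rfl fun b hb => sum_congr rfl (e211 a b hb),
    sum_congr rfl fun a _ => sum_congr rfl fun b hb => sum_congr rfl fun c hc =>
      sum_congr rfl (e1111 a b hb c hc)]

end ProbabilityTheory

theorem ds_second_moment_general {Ω : Type*} [MeasurableSpace Ω] (P : Measure Ω)
    (N M : ℕ) (hN : 0 < N)
    (θ : Fin M → ℝ) (hθ : ∀ m, 0 < θ m)
    (ξ : Fin M → Ω → ℝ) (hmeas : ∀ m, Measurable (ξ m))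
    (hindep : iIndepFun ξ P)
    (hgamma : ∀ m, HasGammaLaw P (ξ m) (N : ℝ) (θ m)) :
    ∫ ω, (∑ m, ξ m ω) ^ 4 ∂P =
      (∑ m, (N : ℝ) * ((N : ℝ) + 1) * ((N : ℝ) + 2) * ((N : ℝ) + 3) * θ m ^ 4)
      + 4 * ∑ m, ∑ m₁ ∈ Finset.univ \ {m},
          ((N : ℝ) * ((N : ℝ) + 1) * ((N : ℝ) + 2) * θ m ^ 3) * ((N : ℝ) * θ m₁)
      + 3 * ∑ m, ∑ m₁ ∈ Finset.univ \ {m},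
          ((N : ℝ) * ((N : ℝ) + 1) * θ m ^ 2) * ((N : ℝ) * ((N : ℝ) + 1) * θ m₁ ^ 2)
      + 6 * ∑ m, ∑ m₁ ∈ Finset.univ \ {m}, ∑ m₂ ∈ Finset.univ \ {m, m₁},
          ((N : ℝ) * ((N : ℝ) + 1) * θ m ^ 2) * ((N : ℝ) * θ m₁) * ((N : ℝ) * θ m₂)
      + ∑ m, ∑ m₁ ∈ Finset.univ \ {m}, ∑ m₂ ∈ Finset.univ \ {m, m₁},
          ∑ m₃ ∈ Finset.univ \ {m, m₁, m₂},
          (N : ℝ) ^ 4 * θ m * θ m₁ * θ m₂ * θ m₃ := by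
  have hN' : (0 : ℝ) < N := Nat.cast_pos.2 hN
  have moment m k := (hgamma m).integral_pow (hmeas m).aemeasurable hN' (hθ m) k
  have mean m : ∫ ω, ξ m ω ∂P = N * θ m := by simpa using moment m 1
  have moment₂ m : ∫ ω, ξ m ω ^ 2 ∂P = N * (N + 1) * θ m ^ 2 := by
    simpa [ascPochhammer_succ_eval] using moment m 2
  have moment₃ m : ∫ ω, ξ m ω ^ 3 ∂P = N * (N + 1) * (N + 2) * θ m ^ 3 := by
    simpa [ascPochhammer_succ_eval] using moment m 3
  have moment₄ m : ∫ ω, ξ m ω ^ 4 ∂P = N * (N + 1) * (N + 2) * (N + 3) * θ m ^ 4 := by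
    simpa [ascPochhammer_succ_eval] using moment m 4
  have hL4 m : MemLp (ξ m) 4 P := by
    exact_mod_cast (hgamma m).memLp (hmeas m).aemeasurable hN' (hθ m) four_ne_zero
  rw [hindep.integral_sum_pow_four hL4]
  simp only [mean, moment₂, moment₃, moment₄]
  congr 1
  refine sum_congr rfl fun a _ => sum_congr rfl fun b _ => sum_congr rfl fun c _ =>
    sum_congr rfl fun d _ => by ring

/-- **Second moment of the desired signal (Lemma 1, (35) + (17)).** If
`ξ_1, …, ξ_M` are independent with `ξ_m ~ Gamma(N, θ_m)`, then `E[(∑ ξ_m)⁴]`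
equals the multinomial expansion with the explicit Gamma moments inserted. -/
theorem ds_second_moment {Ω : Type*} [MeasurableSpace Ω] (P : Measure Ω)
    [IsProbabilityMeasure P] (N M : ℕ) (hN : 0 < N) (hM : 0 < M)
    (θ : Fin M → ℝ) (hθ : ∀ m, 0 < θ m)
    (ξ : Fin M → Ω → ℝ) (hmeas : ∀ m, Measurable (ξ m))
    (hindep : iIndepFun ξ P)
    (hgamma : ∀ m, HasGammaLaw P (ξ m) (N : ℝ) (θ m)) :
    ∫ ω, (∑ m, ξ m ω) ^ 4 ∂P =
      (∑ m, (N : ℝ) * ((N : ℝ) + 1) * ((N : ℝ) + 2) * ((N : ℝ) + 3) * θ m ^ 4)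
      + 4 * ∑ m, ∑ m₁ ∈ Finset.univ \ {m},
          ((N : ℝ) * ((N : ℝ) + 1) * ((N : ℝ) + 2) * θ m ^ 3) * ((N : ℝ) * θ m₁)
      + 3 * ∑ m, ∑ m₁ ∈ Finset.univ \ {m},
          ((N : ℝ) * ((N : ℝ) + 1) * θ m ^ 2) * ((N : ℝ) * ((N : ℝ) + 1) * θ m₁ ^ 2)
      + 6 * ∑ m, ∑ m₁ ∈ Finset.univ \ {m}, ∑ m₂ ∈ Finset.univ \ {m, m₁},
          ((N : ℝ) * ((N : ℝ) + 1) * θ m ^ 2) * ((N : ℝ) * θ m₁) * ((N : ℝ) * θ m₂)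
      + ∑ m, ∑ m₁ ∈ Finset.univ \ {m}, ∑ m₂ ∈ Finset.univ \ {m, m₁},
          ∑ m₃ ∈ Finset.univ \ {m, m₁, m₂},
          (N : ℝ) ^ 4 * θ m * θ m₁ * θ m₂ * θ m₃ :=
  ds_second_moment_general P N M hN θ hθ ξ hmeas hindep hgamma
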